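/- arXiv:1503.06851 — 9 statements merged into one kernel-verified Lean document; each statement's English description precedes it below -/
import Mathlib

section
/- In the duopoly pricing game, suppose that the second-priority allocations vanish, Xhi_1 = Xhi_2 = 0, while the first-priority allocations are positive, Xlo_1 > 0 and Xlo_2 > 0. Then (p_1, p_2) = (0, 0) is a pure Nash equilibrium, and it is the unique pure Nash equilibrium. -/
/-- Firm's payoff in the duopoly pricing game: its own price is `p`, the
opponent's price is `q`; it receives allocation `Xlo` when it has the strictly
lower price, `Xhi` when it has the strictly higher price, and the average under
a tie. -/
noncomputable def payoff (Xlo Xhi p q : ℝ) : ℝ :=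
  if p < q then p * Xlo else if p = q then p * ((Xlo + Xhi) / 2) else p * Xhi

/-- `(p₁, p₂)` is a pure Nash equilibrium of the duopoly pricing game with
reservation utility `R` and allocation parameters `Xlo₁, Xhi₁, Xlo₂, Xhi₂`. -/
def IsPureNash (R Xlo₁ Xhi₁ Xlo₂ Xhi₂ p₁ p₂ : ℝ) : Prop :=
  p₁ ∈ Set.Icc 0 R ∧ p₂ ∈ Set.Icc 0 R ∧
  (∀ p ∈ Set.Icc (0 : ℝ) R, payoff Xlo₁ Xhi₁ p p₂ ≤ payoff Xlo₁ Xhi₁ p₁ p₂) ∧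
  (∀ p ∈ Set.Icc (0 : ℝ) R, payoff Xlo₂ Xhi₂ p p₁ ≤ payoff Xlo₂ Xhi₂ p₂ p₁)

/-- Against a strictly positive opponent price there is no best response when
`Xhi = 0` and `Xlo > 0`. -/
lemma no_best_response (R Xlo q p₀ : ℝ) (hXlo : 0 < Xlo) (hq : 0 < q)
    (hqR : q ≤ R) (hp₀ : 0 ≤ p₀) :
    ¬ (∀ p ∈ Set.Icc (0 : ℝ) R, payoff Xlo 0 p q ≤ payoff Xlo 0 p₀ q) := by
  intro h
  rcases lt_trichotomy p₀ q with hlt | heq | hgt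
  · set p := (p₀ + q) / 2 with hp
    have hp1 : p₀ < p := by simp [hp]; linarith
    have hp2 : p < q := by simp [hp]; linarith
    have := h p ⟨by linarith, by linarith⟩
    simp only [payoff, if_pos hp2, if_pos hlt] at this
    nlinarith
  · set p := 3 * q / 4 with hp
    have hp2 : p < q := by simp [hp]; linarith
    have := h p ⟨by simp [hp]; linarith, by linarith⟩
    norm_num [payoff, hp2, heq] at this
    nlinarith
  · set p := q / 2 with hp
    have hp2 : p < q := by simp [hp]; linarith
    have := h p ⟨by simp [hp]; linarith, by linarith⟩
    simp only [payoff, if_pos hp2, if_neg (not_lt.2 hgt.le), if_neg hgt.ne'] at this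
    nlinarith

/-- If the second-priority allocations vanish (`Xhi₁ = Xhi₂ = 0`) while the
first-priority allocations are positive, then `(0, 0)` is a pure Nash
equilibrium of the pricing game and it is the unique one. -/
theorem zero_prices_unique_nash (R Xlo₁ Xlo₂ : ℝ) (hR : 0 < R)
    (h1 : 0 < Xlo₁) (h2 : 0 < Xlo₂) :
    IsPureNash R Xlo₁ 0 Xlo₂ 0 0 0 ∧
      ∀ p₁ p₂ : ℝ, IsPureNash R Xlo₁ 0 Xlo₂ 0 p₁ p₂ → p₁ = 0 ∧ p₂ = 0 := by
  constructor
  · refine ⟨⟨le_refl 0, hR.le⟩, ⟨le_refl 0, hR.le⟩, ?_, ?_⟩ <;>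
    · intro p hp
      rcases eq_or_lt_of_le hp.1 with h | h
      · simp [payoff, ← h]
      · simp [payoff, not_lt.2 h.le, h.ne', mul_zero]
  · rintro p₁ p₂ ⟨⟨hp₁0, hp₁R⟩, ⟨hp₂0, hp₂R⟩, hB1, hB2⟩
    constructor
    · by_contra hne
      have hp₁ : 0 < p₁ := lt_of_le_of_ne hp₁0 (Ne.symm hne)
      exact no_best_response R Xlo₂ p₁ p₂ h2 hp₁ hp₁R hp₂0 hB2
    · by_contra hne
      have hp₂ : 0 < p₂ := lt_of_le_of_ne hp₂0 (Ne.symm hne)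
      exact no_best_response R Xlo₁ p₂ p₁ h1 hp₂ hp₂R hp₁0 hB1
end

section
/- Let Upsilon_2(x) = integral from L to x of g_2(t) dt. Then firm 1's expected payoff against mu_2 from pricing at x, namely x*(Xhi_1*Upsilon_2(x) + Xlo_1*(1 - Upsilon_2(x))), equals R*Xhi_1 for every x in [L, R], while for every x in [0, L) the payoff x*Xlo_1 is strictly less than R*Xhi_1. Consequently firm 1's equilibrium payoff is pi_1* = R*Xhi_1 and no pure price in [0,R] yields firm 1 a payoff exceeding R*Xhi_1 against mu_2. -/
open MeasureTheory

/-!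
On `[L, x]` the density `g₂` integrates to `Υ₂(x) = R Xhi₁ / (Xlo₁ - Xhi₁) * (1/L - 1/x)`, so
firm 1's expected allocation `Xlo₁ - (Xlo₁ - Xhi₁) Υ₂(x)` at a price `x ≥ L` is exactly
`R Xhi₁ / x`: this is what makes firm 1 indifferent over the support of `μ₂`. Below `L` firm 1
undercuts surely and earns `x Xlo₁ < L Xlo₁ = R Xhi₁`.
-/

theorem integral_inv_sq {a b : ℝ} (h : (0 : ℝ) ∉ Set.uIcc a b) :
    ∫ t in a..b, (t ^ 2)⁻¹ = a⁻¹ - b⁻¹ := by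
  have := integral_zpow (n := -2) (Or.inr ⟨by norm_num, h⟩)
  simp only [zpow_neg, zpow_ofNat] at this
  rw [this]
  norm_num
  ring

theorem integral_div_mul_sq {a b : ℝ} (c d : ℝ) (h : (0 : ℝ) ∉ Set.uIcc a b) :
    ∫ t in a..b, c / (d * t ^ 2) = c / d * (a⁻¹ - b⁻¹) := by
  simp only [div_mul_eq_div_div, div_eq_mul_inv (c / d)]
  rw [intervalIntegral.integral_const_mul, integral_inv_sq h]

theorem payoff_eq_of_cdf_eq {R xlo xhi x F : ℝ} (hR : R ≠ 0) (hhi : xhi ≠ 0)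
    (hgap : xlo - xhi ≠ 0) (hx : x ≠ 0)
    (hF : F = R * xhi / (xlo - xhi) * ((R * xhi / xlo)⁻¹ - x⁻¹)) :
    x * (xhi * F + xlo * (1 - F)) = R * xhi := by
  subst hF
  field_simp
  ring

theorem firm_one_payoff_constant_on_support_general
    (R Xlo₁ Xhi₁ : ℝ) (hR : 0 < R)
    (hhi1 : 0 < Xhi₁) (h1 : Xhi₁ < Xlo₁)
    (L : ℝ) (hL : L = R * Xhi₁ / Xlo₁)
    (Υ₂ : ℝ → ℝ)
    (hΥ₂ : ∀ x : ℝ, Υ₂ x = ∫ t in L..x, R * Xhi₁ / ((Xlo₁ - Xhi₁) * t ^ 2)) :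
    (∀ x ∈ Set.Icc L R,
        x * (Xhi₁ * Υ₂ x + Xlo₁ * (1 - Υ₂ x)) = R * Xhi₁) ∧
      (∀ x ∈ Set.Ico (0 : ℝ) L, x * Xlo₁ < R * Xhi₁) ∧
      (∀ x ∈ Set.Icc (0 : ℝ) R,
        (if x < L then x * Xlo₁ else x * (Xhi₁ * Υ₂ x + Xlo₁ * (1 - Υ₂ x)))
          ≤ R * Xhi₁) := by
  have hlo1 : 0 < Xlo₁ := hhi1.trans h1
  have hLpos : 0 < L := hL ▸ by positivity
  have on_support : ∀ x ∈ Set.Icc L R,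
      x * (Xhi₁ * Υ₂ x + Xlo₁ * (1 - Υ₂ x)) = R * Xhi₁ := by
    rintro x ⟨hLx, -⟩
    have hxpos : 0 < x := hLpos.trans_le hLx
    have hzero : (0 : ℝ) ∉ Set.uIcc L x := by
      rw [Set.uIcc_of_le hLx]
      exact fun h => hLpos.not_ge h.1
    refine payoff_eq_of_cdf_eq hR.ne' hhi1.ne' (sub_pos.2 h1).ne' hxpos.ne' ?_
    rw [hΥ₂, integral_div_mul_sq _ _ hzero, hL]
  have below_support : ∀ x ∈ Set.Ico (0 : ℝ) L, x * Xlo₁ < R * Xhi₁ :=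
    fun x hx => (lt_div_iff₀ hlo1).1 (hL ▸ hx.2)
  refine ⟨on_support, below_support, fun x hx => ?_⟩
  split_ifs with hxL
  · exact (below_support x ⟨hx.1, hxL⟩).le
  · exact (on_support x ⟨not_lt.1 hxL, hx.2⟩).le

/-- Let `Υ₂(x) = ∫_L^x g₂(t) dt` be the CDF of firm 2's equilibrium mixed
strategy, with `g₂(t) = R*Xhi₁/((Xlo₁ - Xhi₁)*t²)` and `L = R*Xhi₁/Xlo₁`.
Then firm 1's expected payoff against `μ₂` from pricing at `x`, namely
`x*(Xhi₁*Υ₂(x) + Xlo₁*(1 - Υ₂(x)))`, equals `R*Xhi₁` for every `x ∈ [L, R]`,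
while for every `x ∈ [0, L)` the payoff `x*Xlo₁` is strictly less than
`R*Xhi₁`. Consequently firm 1's equilibrium payoff is `π₁* = R*Xhi₁` and no
pure price in `[0, R]` yields firm 1 a payoff exceeding `R*Xhi₁` against
`μ₂`. -/
theorem firm_one_payoff_constant_on_support
    (R Xlo₁ Xlo₂ Xhi₁ Xhi₂ : ℝ) (hR : 0 < R)
    (h12 : Xlo₂ ≤ Xlo₁) (hlo2 : 0 < Xlo₂)
    (hhi1 : 0 < Xhi₁) (h1 : Xhi₁ < Xlo₁)
    (hhi2 : 0 < Xhi₂) (h2 : Xhi₂ < Xlo₂)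
    (hhi12 : Xhi₂ ≤ Xhi₁) (hcross : Xhi₂ * Xlo₁ ≤ Xhi₁ * Xlo₂)
    (L : ℝ) (hL : L = R * Xhi₁ / Xlo₁)
    (Υ₂ : ℝ → ℝ)
    (hΥ₂ : ∀ x : ℝ, Υ₂ x = ∫ t in L..x, R * Xhi₁ / ((Xlo₁ - Xhi₁) * t ^ 2)) :
    (∀ x ∈ Set.Icc L R,
        x * (Xhi₁ * Υ₂ x + Xlo₁ * (1 - Υ₂ x)) = R * Xhi₁) ∧
      (∀ x ∈ Set.Ico (0 : ℝ) L, x * Xlo₁ < R * Xhi₁) ∧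
      (∀ x ∈ Set.Icc (0 : ℝ) R,
        (if x < L then x * Xlo₁ else x * (Xhi₁ * Υ₂ x + Xlo₁ * (1 - Υ₂ x)))
          ≤ R * Xhi₁) :=
  firm_one_payoff_constant_on_support_general R Xlo₁ Xhi₁ hR hhi1 h1 L hL Υ₂ hΥ₂
end

section
/- The atom mass a = (Xlo_2*Xhi_1 - Xhi_2*Xlo_1)/(Xlo_1*(Xlo_2 - Xhi_2)) satisfies 0 <= a < 1, and the density g_1(x) = R*Xhi_1*Xlo_2/(Xlo_1*(Xlo_2 - Xhi_2)*x^2) integrates to 1 - a over [L, R], where L = R*Xhi_1/Xlo_1; hence firm 1's equilibrium mixed strategy mu_1 is a probability measure on [L, R]. -/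
open MeasureTheory

/-!
The density `g₁` is a constant multiple of `x⁻²`, so its integral over `[L, R]` is
`c (L⁻¹ - R⁻¹)`; with `L = R Xhi₁ / Xlo₁` this is
`Xlo₂ (Xlo₁ - Xhi₁) / (Xlo₁ (Xlo₂ - Xhi₂))`, which is exactly `1 - a`.
The cross condition `Xhi₂ Xlo₁ ≤ Xhi₁ Xlo₂` makes `a ≥ 0`, and `Xhi₁ < Xlo₁` makes `1 - a > 0`.
-/

theorem integral_inv_sq_of_pos {a b : ℝ} (ha : 0 < a) (hb : 0 < b) :
    ∫ x in a..b, (x ^ 2)⁻¹ = a⁻¹ - b⁻¹ := by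
  have h0 : (0 : ℝ) ∉ Set.uIcc a b := fun h => (lt_min ha hb).not_ge h.1
  have := integral_zpow (a := a) (b := b) (n := -2) (Or.inr ⟨by decide, h0⟩)
  simp only [zpow_neg, zpow_ofNat] at this
  rw [this]
  norm_num
  ring

theorem integral_div_mul_sq_of_pos {a b : ℝ} (c d : ℝ) (ha : 0 < a) (hb : 0 < b) :
    ∫ x in a..b, c / (d * x ^ 2) = c / d * (a⁻¹ - b⁻¹) := by
  simp only [div_mul_eq_div_div, div_eq_mul_inv _ (_ ^ 2)]
  rw [intervalIntegral.integral_const_mul, integral_inv_sq_of_pos ha hb]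

theorem isProbabilityMeasure_withDensity_add_smul_dirac {α : Type*} [MeasurableSpace α]
    {μ : Measure α} {f : α → ℝ} {a : ℝ} (p : α) (hf : Integrable f μ) (hf0 : 0 ≤ᵐ[μ] f)
    (ha : 0 ≤ a) (hmass : ∫ x, f x ∂μ = 1 - a) :
    IsProbabilityMeasure
      (μ.withDensity (fun x => ENNReal.ofReal (f x)) + ENNReal.ofReal a • Measure.dirac p) := by
  have hdensity :
      μ.withDensity (fun x => ENNReal.ofReal (f x)) Set.univ = ENNReal.ofReal (1 - a) := by
    rw [withDensity_apply _ MeasurableSet.univ, Measure.restrict_univ,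
      ← ofReal_integral_eq_lintegral_ofReal hf hf0, hmass]
  have hsub : 0 ≤ 1 - a := hmass ▸ integral_nonneg_of_ae hf0
  constructor
  rw [Measure.add_apply, hdensity, Measure.smul_apply, measure_univ, smul_eq_mul, mul_one,
    ← ENNReal.ofReal_add hsub ha, sub_add_cancel, ENNReal.ofReal_one]

theorem firm_one_strategy_is_probability_general
    (R Xlo₁ Xlo₂ Xhi₁ Xhi₂ : ℝ) (hR : 0 < R)
    (hlo2 : 0 < Xlo₂)
    (hhi1 : 0 < Xhi₁) (h1 : Xhi₁ < Xlo₁)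
    (h2 : Xhi₂ < Xlo₂)
    (hcross : Xhi₂ * Xlo₁ ≤ Xhi₁ * Xlo₂)
    (L a : ℝ) (hL : L = R * Xhi₁ / Xlo₁)
    (ha : a = (Xlo₂ * Xhi₁ - Xhi₂ * Xlo₁) / (Xlo₁ * (Xlo₂ - Xhi₂))) :
    0 ≤ a ∧ a < 1 ∧
      (∫ x in L..R, R * Xhi₁ * Xlo₂ / (Xlo₁ * (Xlo₂ - Xhi₂) * x ^ 2)) = 1 - a ∧
      IsProbabilityMeasure
        (((volume.restrict (Set.Icc L R)).withDensity
            fun x => ENNReal.ofReal (R * Xhi₁ * Xlo₂ / (Xlo₁ * (Xlo₂ - Xhi₂) * x ^ 2)))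
          + ENNReal.ofReal a • Measure.dirac R) := by
  have hlo1 : 0 < Xlo₁ := hhi1.trans h1
  have hgap : 0 < Xlo₂ - Xhi₂ := sub_pos.2 h2
  have hden : 0 < Xlo₁ * (Xlo₂ - Xhi₂) := mul_pos hlo1 hgap
  have hL0 : 0 < L := hL ▸ by positivity
  have hLR : L ≤ R := hL ▸ (div_le_iff₀ hlo1).2 (mul_le_mul_of_nonneg_left h1.le hR.le)
  have ha0 : 0 ≤ a := ha ▸ div_nonneg (by linarith) hden.le
  have ha1 : a < 1 := by
    rw [ha, div_lt_one hden]
    nlinarith [mul_lt_mul_of_pos_left h1 hlo2]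
  have hmass : (∫ x in L..R, R * Xhi₁ * Xlo₂ / (Xlo₁ * (Xlo₂ - Xhi₂) * x ^ 2)) = 1 - a := by
    rw [integral_div_mul_sq_of_pos _ _ hL0 hR, hL, ha]
    field_simp [hgap.ne']
    ring
  refine ⟨ha0, ha1, hmass, isProbabilityMeasure_withDensity_add_smul_dirac R ?_ ?_ ha0 ?_⟩
  · refine ContinuousOn.integrableOn_Icc (continuousOn_const.div (by fun_prop) fun x hx => ?_)
    exact (mul_pos hden (pow_pos (hL0.trans_le hx.1) 2)).ne'
  · exact Filter.Eventually.of_forall fun x =>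
      div_nonneg (by positivity) (mul_nonneg hden.le (sq_nonneg x))
  · rw [integral_Icc_eq_integral_Ioc, ← intervalIntegral.integral_of_le hLR, hmass]

/-- The atom mass `a = (Xlo₂*Xhi₁ - Xhi₂*Xlo₁)/(Xlo₁*(Xlo₂ - Xhi₂))` satisfies
`0 ≤ a < 1`, and the density `g₁(x) = R*Xhi₁*Xlo₂/(Xlo₁*(Xlo₂ - Xhi₂)*x²)`
integrates to `1 - a` over `[L, R]`, where `L = R*Xhi₁/Xlo₁`; hence firm 1's
equilibrium mixed strategy `μ₁` (density `g₁` on `[L, R]` plus an atom of mass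
`a` at `R`) is a probability measure on `[L, R]`. -/
theorem firm_one_strategy_is_probability
    (R Xlo₁ Xlo₂ Xhi₁ Xhi₂ : ℝ) (hR : 0 < R)
    (h12 : Xlo₂ ≤ Xlo₁) (hlo2 : 0 < Xlo₂)
    (hhi1 : 0 < Xhi₁) (h1 : Xhi₁ < Xlo₁)
    (hhi2 : 0 < Xhi₂) (h2 : Xhi₂ < Xlo₂)
    (hhi12 : Xhi₂ ≤ Xhi₁) (hcross : Xhi₂ * Xlo₁ ≤ Xhi₁ * Xlo₂)
    (L a : ℝ) (hL : L = R * Xhi₁ / Xlo₁)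
    (ha : a = (Xlo₂ * Xhi₁ - Xhi₂ * Xlo₁) / (Xlo₁ * (Xlo₂ - Xhi₂))) :
    0 ≤ a ∧ a < 1 ∧
      (∫ x in L..R, R * Xhi₁ * Xlo₂ / (Xlo₁ * (Xlo₂ - Xhi₂) * x ^ 2)) = 1 - a ∧
      IsProbabilityMeasure
        (((volume.restrict (Set.Icc L R)).withDensity
            fun x => ENNReal.ofReal (R * Xhi₁ * Xlo₂ / (Xlo₁ * (Xlo₂ - Xhi₂) * x ^ 2)))
          + ENNReal.ofReal a • Measure.dirac R) :=
  firm_one_strategy_is_probability_general R Xlo₁ Xlo₂ Xhi₁ Xhi₂ hR hlo2 hhi1 h1 h2 hcross L a hL ha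
end

section
/- Let Upsilon_1(x) = integral from L to x of g_1(t) dt. Then firm 2's expected payoff against mu_1 from pricing at x, namely x*(Xhi_2*Upsilon_1(x) + Xlo_2*(1 - Upsilon_1(x))), equals pi_2* := R*Xhi_1*Xlo_2/Xlo_1 for every x in [L, R); for every x in [0, L) the payoff x*Xlo_2 is strictly less than pi_2*; and the payoff from pricing exactly at R, namely R*((1-a)*Xhi_2 + a*(Xlo_2 + Xhi_2)/2), is at most pi_2*. Consequently firm 2's equilibrium payoff is pi_2* and no pure price in [0,R] yields firm 2 a payoff exceeding pi_2* against mu_1. -/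
open MeasureTheory

/-- Let `Υ₁(x) = ∫_L^x g₁(t) dt` with
`g₁(t) = R*Xhi₁*Xlo₂/(Xlo₁*(Xlo₂ - Xhi₂)*t²)`, `L = R*Xhi₁/Xlo₁`, and atom
mass `a = (Xlo₂*Xhi₁ - Xhi₂*Xlo₁)/(Xlo₁*(Xlo₂ - Xhi₂))` at `R`.  Then firm 2's
expected payoff against `μ₁` from pricing at `x`, namely
`x*(Xhi₂*Υ₁(x) + Xlo₂*(1 - Υ₁(x)))`, equals `π₂* = R*Xhi₁*Xlo₂/Xlo₁` for every
`x ∈ [L, R)`; for every `x ∈ [0, L)` the payoff `x*Xlo₂` is strictly less than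
`π₂*`; and the payoff from pricing exactly at `R`, namely
`R*((1-a)*Xhi₂ + a*(Xlo₂ + Xhi₂)/2)`, is at most `π₂*`.  Consequently firm 2's
equilibrium payoff is `π₂*` and no pure price in `[0, R]` yields firm 2 a
payoff exceeding `π₂*` against `μ₁`. -/
theorem firm_two_payoff_constant_on_support
    (R Xlo₁ Xlo₂ Xhi₁ Xhi₂ : ℝ) (hR : 0 < R)
    (h12 : Xlo₂ ≤ Xlo₁) (hlo2 : 0 < Xlo₂)
    (hhi1 : 0 < Xhi₁) (h1 : Xhi₁ < Xlo₁)
    (hhi2 : 0 < Xhi₂) (h2 : Xhi₂ < Xlo₂)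
    (hhi12 : Xhi₂ ≤ Xhi₁) (hcross : Xhi₂ * Xlo₁ ≤ Xhi₁ * Xlo₂)
    (L a : ℝ) (hL : L = R * Xhi₁ / Xlo₁)
    (ha : a = (Xlo₂ * Xhi₁ - Xhi₂ * Xlo₁) / (Xlo₁ * (Xlo₂ - Xhi₂)))
    (Υ₁ : ℝ → ℝ)
    (hΥ₁ : ∀ x : ℝ,
      Υ₁ x = ∫ t in L..x, R * Xhi₁ * Xlo₂ / (Xlo₁ * (Xlo₂ - Xhi₂) * t ^ 2)) :
    (∀ x ∈ Set.Ico L R,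
        x * (Xhi₂ * Υ₁ x + Xlo₂ * (1 - Υ₁ x)) = R * Xhi₁ * Xlo₂ / Xlo₁) ∧
      (∀ x ∈ Set.Ico (0 : ℝ) L, x * Xlo₂ < R * Xhi₁ * Xlo₂ / Xlo₁) ∧
      R * ((1 - a) * Xhi₂ + a * ((Xlo₂ + Xhi₂) / 2)) ≤ R * Xhi₁ * Xlo₂ / Xlo₁ ∧
      (∀ x ∈ Set.Icc (0 : ℝ) R,
        (if x < L then x * Xlo₂
          else if x < R then x * (Xhi₂ * Υ₁ x + Xlo₂ * (1 - Υ₁ x))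
          else R * ((1 - a) * Xhi₂ + a * ((Xlo₂ + Xhi₂) / 2)))
          ≤ R * Xhi₁ * Xlo₂ / Xlo₁) := by
  have hlo1 : 0 < Xlo₁ := lt_trans hhi1 h1
  have hd : 0 < Xlo₂ - Xhi₂ := sub_pos.2 h2
  have hL0 : 0 < L := by rw [hL]; positivity
  have key : ∀ x, L ≤ x → x * (Xhi₂ * Υ₁ x + Xlo₂ * (1 - Υ₁ x)) = R * Xhi₁ * Xlo₂ / Xlo₁ := by
    intro x hx
    have hx0 : 0 < x := lt_of_lt_of_le hL0 hx
    have hU : Υ₁ x = R * Xhi₁ * Xlo₂ / (Xlo₁ * (Xlo₂ - Xhi₂)) * (L⁻¹ - x⁻¹) := by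
      rw [hΥ₁ x]
      have hcg : Set.EqOn (fun t : ℝ => R * Xhi₁ * Xlo₂ / (Xlo₁ * (Xlo₂ - Xhi₂) * t ^ 2))
          (fun t : ℝ => R * Xhi₁ * Xlo₂ / (Xlo₁ * (Xlo₂ - Xhi₂)) * t ^ (-2 : ℤ))
          (Set.uIcc L x) := by
        intro t _
        have h2z : (t:ℝ) ^ (-2 : ℤ) = (t ^ 2)⁻¹ := by
          rw [zpow_neg]
          norm_cast
        show R * Xhi₁ * Xlo₂ / (Xlo₁ * (Xlo₂ - Xhi₂) * t ^ 2)
            = R * Xhi₁ * Xlo₂ / (Xlo₁ * (Xlo₂ - Xhi₂)) * t ^ (-2 : ℤ)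
        rw [h2z, div_mul_eq_div_div, div_eq_mul_inv, div_eq_mul_inv]
      have h0mem : (0:ℝ) ∉ Set.uIcc L x := by
        rw [Set.uIcc_of_le hx]
        intro h0
        exact absurd hL0 (not_lt.2 h0.1)
      rw [intervalIntegral.integral_congr hcg, intervalIntegral.integral_const_mul,
        integral_zpow (Or.inr ⟨by decide, h0mem⟩)]
      norm_num
      left
      ring
    rw [hU, hL]
    have hR' : R ≠ 0 := ne_of_gt hR
    have h1' : Xlo₁ ≠ 0 := ne_of_gt hlo1
    have hh1' : Xhi₁ ≠ 0 := ne_of_gt hhi1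
    have hd' : Xlo₂ - Xhi₂ ≠ 0 := ne_of_gt hd
    have hx' : x ≠ 0 := ne_of_gt hx0
    field_simp
    ring
  have hLlt : L * Xlo₂ = R * Xhi₁ * Xlo₂ / Xlo₁ := by
    rw [hL]; field_simp
  have hatom : R * ((1 - a) * Xhi₂ + a * ((Xlo₂ + Xhi₂) / 2)) ≤ R * Xhi₁ * Xlo₂ / Xlo₁ := by
    rw [ha, le_div_iff₀ hlo1]
    have expand : R * ((1 - (Xlo₂ * Xhi₁ - Xhi₂ * Xlo₁) / (Xlo₁ * (Xlo₂ - Xhi₂))) * Xhi₂ +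
        (Xlo₂ * Xhi₁ - Xhi₂ * Xlo₁) / (Xlo₁ * (Xlo₂ - Xhi₂)) * ((Xlo₂ + Xhi₂) / 2)) * Xlo₁
        = R * (Xhi₂ * Xlo₁ + Xlo₂ * Xhi₁) / 2 := by
      field_simp
      ring
    rw [expand]
    nlinarith [mul_le_mul_of_nonneg_left hcross (le_of_lt hR)]
  refine ⟨fun x hx => key x hx.1, fun x hx => ?_, hatom, fun x hx => ?_⟩
  · calc x * Xlo₂ < L * Xlo₂ := by
          exact mul_lt_mul_of_pos_right hx.2 hlo2
      _ = R * Xhi₁ * Xlo₂ / Xlo₁ := hLlt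
  · by_cases h1c : x < L
    · rw [if_pos h1c]
      rcases eq_or_lt_of_le hx.1 with h | h
      · rw [← h]; simp; positivity
      · exact le_of_lt (by calc x * Xlo₂ < L * Xlo₂ := mul_lt_mul_of_pos_right h1c hlo2
          _ = R * Xhi₁ * Xlo₂ / Xlo₁ := hLlt)
    · rw [if_neg h1c]
      by_cases h2c : x < R
      · rw [if_pos h2c]
        exact le_of_eq (key x (not_lt.1 h1c))
      · rw [if_neg h2c]
        exact hatom
end

section
/- The expected price of firm 1's equilibrium mixed strategy satisfies rho_1* := (integral from L to R of x*g_1(x) dx) + R*a = (R/(Xlo_1*(Xlo_2 - Xhi_2))) * (Xhi_1*Xlo_2*(1 + ln(Xlo_1/Xhi_1)) - Xhi_2*Xlo_1), where L = R*Xhi_1/Xlo_1, g_1(x) = R*Xhi_1*Xlo_2/(Xlo_1*(Xlo_2 - Xhi_2)*x^2), and a = (Xlo_2*Xhi_1 - Xhi_2*Xlo_1)/(Xlo_1*(Xlo_2 - Xhi_2)). -/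
theorem integral_mul_div_mul_sq {a b : ℝ} (c d : ℝ) (ha : 0 < a) (hb : 0 < b) :
    ∫ x in a..b, x * (c / (d * x ^ 2)) = c / d * Real.log (b / a) := by
  have hinv : ∀ x ∈ Set.uIcc a b, x * (c / (d * x ^ 2)) = c / d * x⁻¹ := by
    intro x hx
    have hx0 : x ≠ 0 := (lt_of_lt_of_le (lt_min ha hb) hx.1).ne'
    simp only [div_eq_mul_inv, mul_inv]
    linear_combination c * d⁻¹ * x⁻¹ * mul_inv_cancel₀ hx0
  rw [intervalIntegral.integral_congr hinv, intervalIntegral.integral_const_mul,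
    integral_inv_of_pos ha hb]

theorem firm_one_expected_price_general
    (R Xlo₁ Xlo₂ Xhi₁ Xhi₂ : ℝ) (hR : 0 < R)
    (hhi1 : 0 < Xhi₁) (h1 : Xhi₁ < Xlo₁)
    (a : ℝ) (ha : a = (Xlo₂ * Xhi₁ - Xhi₂ * Xlo₁) / (Xlo₁ * (Xlo₂ - Xhi₂))) :
    (∫ x in (R * Xhi₁ / Xlo₁)..R,
        x * (R * Xhi₁ * Xlo₂ / (Xlo₁ * (Xlo₂ - Xhi₂) * x ^ 2))) + R * a
      = R / (Xlo₁ * (Xlo₂ - Xhi₂))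
          * (Xhi₁ * Xlo₂ * (1 + Real.log (Xlo₁ / Xhi₁)) - Xhi₂ * Xlo₁) := by
  have hlo1 : 0 < Xlo₁ := hhi1.trans h1
  have hlog : R / (R * Xhi₁ / Xlo₁) = Xlo₁ / Xhi₁ := by field_simp
  rw [integral_mul_div_mul_sq _ _ (by positivity) hR, hlog, ha]
  simp only [div_eq_mul_inv]
  ring

/-- The expected price of firm 1's equilibrium mixed strategy:
`ρ₁* = (∫_L^R x*g₁(x) dx) + R*a
     = (R/(Xlo₁*(Xlo₂ - Xhi₂))) * (Xhi₁*Xlo₂*(1 + ln(Xlo₁/Xhi₁)) - Xhi₂*Xlo₁)`,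
where `L = R*Xhi₁/Xlo₁`, `g₁(x) = R*Xhi₁*Xlo₂/(Xlo₁*(Xlo₂ - Xhi₂)*x²)`, and
`a = (Xlo₂*Xhi₁ - Xhi₂*Xlo₁)/(Xlo₁*(Xlo₂ - Xhi₂))`. -/
theorem firm_one_expected_price
    (R Xlo₁ Xlo₂ Xhi₁ Xhi₂ : ℝ) (hR : 0 < R)
    (h12 : Xlo₂ ≤ Xlo₁) (hlo2 : 0 < Xlo₂)
    (hhi1 : 0 < Xhi₁) (h1 : Xhi₁ < Xlo₁)
    (hhi2 : 0 < Xhi₂) (h2 : Xhi₂ < Xlo₂)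
    (hhi12 : Xhi₂ ≤ Xhi₁) (hcross : Xhi₂ * Xlo₁ ≤ Xhi₁ * Xlo₂)
    (a : ℝ) (ha : a = (Xlo₂ * Xhi₁ - Xhi₂ * Xlo₁) / (Xlo₁ * (Xlo₂ - Xhi₂))) :
    (∫ x in (R * Xhi₁ / Xlo₁)..R,
        x * (R * Xhi₁ * Xlo₂ / (Xlo₁ * (Xlo₂ - Xhi₂) * x ^ 2))) + R * a
      = R / (Xlo₁ * (Xlo₂ - Xhi₂))
          * (Xhi₁ * Xlo₂ * (1 + Real.log (Xlo₁ / Xhi₁)) - Xhi₂ * Xlo₁) :=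
  firm_one_expected_price_general R Xlo₁ Xlo₂ Xhi₁ Xhi₂ hR hhi1 h1 a ha
end

section
/- Let (b^t) and (btil^t) be real sequences such that for every t, btil^t lies between 0 and b^t (that is, 0 <= btil^t <= b^t or b^t <= btil^t <= 0). Let (X^t, S^t) be the storage dynamics driven by input b and (Xtil^t, Stil^t) the storage dynamics driven by input btil, with the same capacity S > 0, leakage alpha in [0,1], and initial state S^0 = Stil^0 in [0,S]. Then for every horizon T >= 0, the sum over t = 0,...,T of |X^t| is at least the sum over t = 0,...,T of |Xtil^t|. (In particular, a firm's total absolute allocation under merit-order dispatch is no smaller when it has first priority, receiving the raw imbalance, than when it has second priority, receiving the residual imbalance left after another storage's first-priority allocation; i.e., its total allocation is nonincreasing in its own price and nondecreasing in the opponent's price.) -/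
set_option maxHeartbeats 2000000

/-- `clamp x l u` truncates `x` below by `l` and above by `u`. -/
noncomputable def clamp (x l u : ℝ) : ℝ := min (max x l) u

/-- State of charge of a storage with capacity `S`, leakage factor `α`, and
initial state `S0`, driven by the input sequence of imbalances `b`:
`state 0 = S0` and `state (t+1) = α * state t + X t`, where
`X t = clamp (b t) (-(α * state t)) (S - α * state t)`. -/
noncomputable def state (S α S0 : ℝ) (b : ℕ → ℝ) : ℕ → ℝ
  | 0 => S0
  | t + 1 =>
      α * state S α S0 b t +
        clamp (b t) (-(α * state S α S0 b t)) (S - α * state S α S0 b t)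

/-- Allocation of the storage at time `t`:
`X t = clamp (b t) (-(α * state t)) (S - α * state t)`. -/
noncomputable def alloc (S α S0 : ℝ) (b : ℕ → ℝ) (t : ℕ) : ℝ :=
  clamp (b t) (-(α * state S α S0 b t)) (S - α * state S α S0 b t)

lemma clamp_eq (x l u : ℝ) (h : l ≤ u) :
    clamp x l u = if x ≤ l then l else if u ≤ x then u else x := by
  unfold clamp
  split_ifs with h1 h2
  · rw [max_eq_right h1, min_eq_left h]
  · rw [min_eq_right]; exact le_trans h2 (le_max_left _ _)
  · rw [max_eq_left (le_of_not_ge h1), min_eq_left (le_of_not_ge h2)]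

lemma key (S u v b bt : ℝ) (hS : 0 < S) (hu : 0 ≤ u) (hu' : u ≤ S)
    (hv : 0 ≤ v) (hv' : v ≤ S)
    (hb : (0 ≤ bt ∧ bt ≤ b) ∨ (b ≤ bt ∧ bt ≤ 0)) :
    |clamp bt (-v) (S - v)| + |(v + clamp bt (-v) (S - v)) - (u + clamp b (-u) (S - u))|
      ≤ |clamp b (-u) (S - u)| + |v - u| := by
  rw [clamp_eq b (-u) (S-u) (by linarith), clamp_eq bt (-v) (S-v) (by linarith)]
  rcases hb with ⟨h1, h2⟩ | ⟨h1, h2⟩ <;>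
    split_ifs <;>
    · simp only [abs_eq_max_neg, max_def]
      split_ifs <;> linarith

lemma state_mem (S α S0 : ℝ) (hS : 0 < S) (hα : α ∈ Set.Icc (0 : ℝ) 1)
    (hS0 : S0 ∈ Set.Icc 0 S) (b : ℕ → ℝ) (t : ℕ) :
    0 ≤ state S α S0 b t ∧ state S α S0 b t ≤ S := by
  induction t with
  | zero => exact ⟨hS0.1, hS0.2⟩
  | succ t ih =>
    have hl : (-(α * state S α S0 b t)) ≤ S - α * state S α S0 b t := by linarith
    have h1 : -(α * state S α S0 b t)
        ≤ clamp (b t) (-(α * state S α S0 b t)) (S - α * state S α S0 b t) :=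
      le_min (le_max_right _ _) hl
    have h2 : clamp (b t) (-(α * state S α S0 b t)) (S - α * state S α S0 b t)
        ≤ S - α * state S α S0 b t := min_le_right _ _
    constructor <;> simp only [state] <;> linarith

/-- If for every `t` the input `btil t` lies between `0` and `b t`, then for
every horizon `T` the total absolute allocation of the storage driven by `b`
is at least that of the storage driven by `btil`.  (In particular, a firm's
total absolute allocation under merit-order dispatch is no smaller under first
priority than under second priority, i.e. it is nonincreasing in its own price
and nondecreasing in the opponent's price.) -/
theorem total_allocation_monotone
    (S α S0 : ℝ) (hS : 0 < S) (hα : α ∈ Set.Icc (0 : ℝ) 1)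
    (hS0 : S0 ∈ Set.Icc 0 S) (b btil : ℕ → ℝ)
    (hb : ∀ t, (0 ≤ btil t ∧ btil t ≤ b t) ∨ (b t ≤ btil t ∧ btil t ≤ 0))
    (T : ℕ) :
    ∑ t ∈ Finset.range (T + 1), |alloc S α S0 btil t|
      ≤ ∑ t ∈ Finset.range (T + 1), |alloc S α S0 b t| := by
  have main : ∀ N : ℕ,
      ∑ t ∈ Finset.range N, |alloc S α S0 btil t|
        + |state S α S0 btil N - state S α S0 b N|
      ≤ ∑ t ∈ Finset.range N, |alloc S α S0 b t| := by
    intro N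
    induction N with
    | zero => simp [state]
    | succ N ih =>
      set s := state S α S0 b N with hs
      set st := state S α S0 btil N with hst
      have hsmem := state_mem S α S0 hS hα hS0 b N
      have hstmem := state_mem S α S0 hS hα hS0 btil N
      have hu : 0 ≤ α * s := mul_nonneg hα.1 hsmem.1
      have hu' : α * s ≤ S :=
        le_trans (mul_le_of_le_one_left hsmem.1 hα.2) hsmem.2
      have hv : 0 ≤ α * st := mul_nonneg hα.1 hstmem.1
      have hv' : α * st ≤ S :=
        le_trans (mul_le_of_le_one_left hstmem.1 hα.2) hstmem.2
      have hk := key S (α * s) (α * st) (b N) (btil N) hS hu hu' hv hv' (hb N)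
      have hlast : |α * st - α * s| ≤ |st - s| := by
        rw [← mul_sub, abs_mul, abs_of_nonneg hα.1]
        calc α * |st - s| ≤ 1 * |st - s| :=
              mul_le_mul_of_nonneg_right hα.2 (abs_nonneg _)
          _ = |st - s| := one_mul _
      rw [Finset.sum_range_succ, Finset.sum_range_succ]
      have hstateb : state S α S0 b (N + 1) = α * s + alloc S α S0 b N := rfl
      have hstatebt : state S α S0 btil (N + 1) = α * st + alloc S α S0 btil N := rfl
      rw [hstateb, hstatebt]
      simp only [alloc, ← hs, ← hst] at *
      have := neg_abs_le (b N)
      linarith [hk, hlast, ih]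
  calc ∑ t ∈ Finset.range (T + 1), |alloc S α S0 btil t|
      ≤ ∑ t ∈ Finset.range (T + 1), |alloc S α S0 btil t|
          + |state S α S0 btil (T + 1) - state S α S0 b (T + 1)| := by
        linarith [abs_nonneg (state S α S0 btil (T + 1) - state S α S0 b (T + 1))]
    _ ≤ ∑ t ∈ Finset.range (T + 1), |alloc S α S0 b t| := main (T + 1)
end

section
/- In the deterministic-demand capacity game with 0 < gamma_i <= R for i = 1,2, every capacity pair (S_1, S_2) with S_1 + S_2 = B and S_i >= ((R - gamma_i)/(2R - gamma_i))*B for i = 1,2 is a pure Nash equilibrium. -/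
/-- Firm `i`'s payoff in the deterministic-demand capacity game with demand
`B`, reservation utility `R` and opportunity cost `γ`, when it commits
capacity `Si` and the other firm commits `Sother`. -/
noncomputable def psi (R B γ Si Sother : ℝ) : ℝ :=
  if Sother ≤ Si then
    -γ * Si + R * clamp (B - min B Sother) 0 Si
  else
    -γ * Si + R * clamp (B - min B Si) 0 Sother * min B Si / min B Sother

/-- `(S₁, S₂)` is a pure Nash equilibrium of the deterministic-demand capacity
game. -/
def IsCapacityNash (R B γ₁ γ₂ S₁ S₂ : ℝ) : Prop :=
  0 ≤ S₁ ∧ 0 ≤ S₂ ∧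
  (∀ S' : ℝ, 0 ≤ S' → psi R B γ₁ S' S₂ ≤ psi R B γ₁ S₁ S₂) ∧
  (∀ S' : ℝ, 0 ≤ S' → psi R B γ₂ S' S₁ ≤ psi R B γ₂ S₂ S₁)

/-!
At the candidate profile each firm sells exactly its own capacity, earning `(R - γ) Sᵢ`.
Raising capacity only adds cost, and lowering it to `S ≤ Sᵢ` only loses sales.
The one dangerous deviation is to `S` strictly between `Sᵢ` and the rival's capacity `Sₒ`,
where the firm is rationed proportionally and earns `-γ S + R (B - S) S / Sₒ`.
This is concave in `S`, and the lower bound on `Sᵢ` is equivalent to `(R - γ) Sₒ ≤ R Sᵢ`,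
i.e. to its slope at `S = Sᵢ` being nonpositive.
-/

section BestResponse

variable {R B γ Si So : ℝ}

theorem psi_of_other_le (hSi : 0 ≤ Si) (hsum : Si + So = B) {S : ℝ} (h : So ≤ S) :
    psi R B γ S So = -γ * S + R * min Si S := by
  have hBSo : B - min B So = Si := by rw [min_eq_right (by linarith)]; linarith
  rw [psi, if_pos h, clamp, hBSo, max_eq_left hSi]

theorem psi_of_lt_other (hSi : 0 ≤ Si) (hsum : Si + So = B) {S : ℝ} (h : S < So) :
    psi R B γ S So = -γ * S + R * min (B - S) So * S / So := by
  rw [psi, if_neg (not_le.2 h), clamp, min_eq_right (by linarith : S ≤ B),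
    min_eq_right (by linarith : So ≤ B), max_eq_left (by linarith : (0 : ℝ) ≤ B - S)]

theorem psi_self (hSi : 0 ≤ Si) (hsum : Si + So = B) :
    psi R B γ Si So = (R - γ) * Si := by
  rcases le_or_gt So Si with h | h
  · rw [psi_of_other_le hSi hsum h, min_self]
    ring
  · have hSo_pos : 0 < So := hSi.trans_lt h
    rw [psi_of_lt_other hSi hsum h, min_eq_right (by linarith)]
    field_simp
    ring

theorem rationed_payoff_le (hR : 0 ≤ R) (hSo : 0 < So) (hsum : Si + So = B)
    (hbound : (R - γ) * So ≤ R * Si) {S : ℝ} (hS : Si ≤ S) :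
    -γ * S + R * (B - S) * S / So ≤ (R - γ) * Si := by
  have hslope : 0 ≤ γ * So - R * (So - Si) := by linarith
  have key : R * (B - S) * S ≤ ((R - γ) * Si + γ * S) * So := by
    rw [← hsum]
    nlinarith [mul_nonneg (sub_nonneg.2 hS) hslope, mul_nonneg hR (sq_nonneg (S - Si))]
  have : R * (B - S) * S / So ≤ (R - γ) * Si + γ * S := (div_le_iff₀ hSo).2 key
  linarith

theorem psi_le_psi_self (hγ : 0 ≤ γ) (hγR : γ ≤ R) (hSi : 0 ≤ Si) (hsum : Si + So = B)
    (hbound : (R - γ) * So ≤ R * Si) {S : ℝ} (hS : 0 ≤ S) :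
    psi R B γ S So ≤ psi R B γ Si So := by
  have hRγ : 0 ≤ R - γ := sub_nonneg.2 hγR
  rw [psi_self hSi hsum]
  rcases le_or_gt So S with hSoS | hSSo
  · rw [psi_of_other_le hSi hsum hSoS]
    rcases le_total S Si with hSSi | hSiS
    · rw [min_eq_right hSSi]
      nlinarith
    · rw [min_eq_left hSiS]
      nlinarith
  · rw [psi_of_lt_other hSi hsum hSSo]
    have hSo_pos : 0 < So := hS.trans_lt hSSo
    rcases le_total S Si with hSSi | hSiS
    · have hsales : R * So * S / So = R * S := by field_simp
      rw [min_eq_right (by linarith), hsales]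
      nlinarith
    · rw [min_eq_left (by linarith)]
      exact rationed_payoff_le (hγ.trans hγR) hSo_pos hsum hbound hSiS

end BestResponse

theorem le_share_iff {R B γ Si So : ℝ} (hden : 0 < 2 * R - γ) (hsum : Si + So = B) :
    (R - γ) / (2 * R - γ) * B ≤ Si ↔ (R - γ) * So ≤ R * Si := by
  rw [div_mul_eq_mul_div, div_le_iff₀ hden, ← hsum]
  constructor <;> intro h <;> linarith

theorem capacity_equilibria_deterministic_general
    (R B γ₁ γ₂ : ℝ) (hB : 0 < B)
    (hγ₁ : 0 < γ₁) (hγ₁R : γ₁ ≤ R) (hγ₂ : 0 < γ₂) (hγ₂R : γ₂ ≤ R)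
    (S₁ S₂ : ℝ) (hsum : S₁ + S₂ = B)
    (h1 : (R - γ₁) / (2 * R - γ₁) * B ≤ S₁)
    (h2 : (R - γ₂) / (2 * R - γ₂) * B ≤ S₂) :
    IsCapacityNash R B γ₁ γ₂ S₁ S₂ := by
  have hsum' : S₂ + S₁ = B := by linarith
  have hden₁ : 0 < 2 * R - γ₁ := by linarith
  have hden₂ : 0 < 2 * R - γ₂ := by linarith
  have hS₁ : 0 ≤ S₁ :=
    (mul_nonneg (div_nonneg (sub_nonneg.2 hγ₁R) hden₁.le) hB.le).trans h1
  have hS₂ : 0 ≤ S₂ :=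
    (mul_nonneg (div_nonneg (sub_nonneg.2 hγ₂R) hden₂.le) hB.le).trans h2
  exact ⟨hS₁, hS₂,
    fun _ => psi_le_psi_self hγ₁.le hγ₁R hS₁ hsum ((le_share_iff hden₁ hsum).1 h1),
    fun _ => psi_le_psi_self hγ₂.le hγ₂R hS₂ hsum' ((le_share_iff hden₂ hsum').1 h2)⟩

/-- In the deterministic-demand capacity game with `0 < γᵢ ≤ R`, every
capacity pair `(S₁, S₂)` with `S₁ + S₂ = B` and
`Sᵢ ≥ ((R - γᵢ)/(2R - γᵢ)) * B` for `i = 1, 2` is a pure Nash equilibrium. -/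
theorem capacity_equilibria_deterministic
    (R B γ₁ γ₂ : ℝ) (hR : 0 < R) (hB : 0 < B)
    (hγ₁ : 0 < γ₁) (hγ₁R : γ₁ ≤ R) (hγ₂ : 0 < γ₂) (hγ₂R : γ₂ ≤ R)
    (S₁ S₂ : ℝ) (hsum : S₁ + S₂ = B)
    (h1 : (R - γ₁) / (2 * R - γ₁) * B ≤ S₁)
    (h2 : (R - γ₂) / (2 * R - γ₂) * B ≤ S₂) :
    IsCapacityNash R B γ₁ γ₂ S₁ S₂ :=
  capacity_equilibria_deterministic_general R B γ₁ γ₂ hB hγ₁ hγ₁R hγ₂ hγ₂R S₁ S₂ hsum h1 h2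
end

section
/- Suppose f is continuous and strictly positive on [0,infinity). For any fixed S' >= 0, R > 0, and any real gamma, the function S maps to R*Xhi(S;S') - gamma*S is strictly concave on [0,infinity). (This is the larger firm's capacity-stage objective, the second-priority equilibrium payoff R times Xhi minus the opportunity cost.) -/
open MeasureTheory

/-- Cumulative distribution function of the density `f` on `[0, ∞)`. -/
noncomputable def cdf (f : ℝ → ℝ) (x : ℝ) : ℝ := ∫ t in (0 : ℝ)..x, f t

/-- Expected second-priority allocation of a storage of capacity `S` when the
opponent has capacity `S'`:
`Xhi(S; S') = ∫_0^S b f(b + S') db + S (1 - F(S + S'))`. -/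
noncomputable def Xhi (f : ℝ → ℝ) (S S' : ℝ) : ℝ :=
  (∫ b in (0 : ℝ)..S, b * f (b + S')) + S * (1 - cdf f (S + S'))

/-! By the fundamental theorem of calculus the boundary terms of `Xhi(·; S')` cancel, so its
derivative is `1 - F(S + S')`. A positive density makes `F` strictly increasing, hence this
derivative is strictly decreasing and `R * Xhi(·; S') - γ * S` is strictly concave. -/

open Set

section Primitive

variable {h : ℝ → ℝ} {a : ℝ}

theorem continuousOn_primitive_Ici (hh : ContinuousOn h (Ici a)) :
    ContinuousOn (fun x => ∫ t in a..x, h t) (Ici a) := by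
  intro x hx
  have hIcc : ContinuousOn (fun y => ∫ t in a..y, h t) (Icc a (x + 1)) := by
    have hint : IntegrableOn h (Icc a (x + 1)) :=
      (hh.mono Icc_subset_Ici_self).integrableOn_Icc
    rw [← uIcc_of_le (by linarith [hx.out])] at hint ⊢
    exact intervalIntegral.continuousOn_primitive_interval hint
  have hnhds : Icc a (x + 1) ∈ nhdsWithin x (Ici a) := by
    rw [← Ici_inter_Iic]
    exact inter_mem_nhdsWithin _ (Iic_mem_nhds (by linarith))
  exact (hIcc x ⟨hx, by linarith⟩).mono_of_mem_nhdsWithin hnhds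

theorem hasDerivAt_primitive_of_continuousOn_Ici (hh : ContinuousOn h (Ici a)) {x : ℝ}
    (hx : a < x) : HasDerivAt (fun y => ∫ t in a..y, h t) (h x) x := by
  have hint : IntervalIntegrable h volume a x :=
    (hh.mono (by rw [uIcc_of_le hx.le]; exact Icc_subset_Ici_self)).intervalIntegrable
  have hmeas : StronglyMeasurableAtFilter h (nhds x) volume :=
    (hh.mono Ioi_subset_Ici_self).stronglyMeasurableAtFilter isOpen_Ioi x hx
  exact intervalIntegral.integral_hasDerivAt_right hint hmeas
    (hh.continuousAt (Ici_mem_nhds hx))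

theorem strictMonoOn_primitive_of_pos (hh : ContinuousOn h (Ici a))
    (hpos : ∀ x ∈ Ici a, 0 < h x) : StrictMonoOn (fun x => ∫ t in a..x, h t) (Ici a) := by
  refine strictMonoOn_of_deriv_pos (convex_Ici a) (continuousOn_primitive_Ici hh) fun x hx => ?_
  rw [interior_Ici] at hx
  rw [(hasDerivAt_primitive_of_continuousOn_Ici hh hx).deriv]
  exact hpos x (mem_Ici_of_Ioi hx)

end Primitive

section Xhi

variable {f : ℝ → ℝ} {S' : ℝ}

theorem continuousOn_comp_add_of_nonneg (hf : ContinuousOn f (Ici 0)) (hS' : 0 ≤ S') :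
    ContinuousOn (fun b => f (b + S')) (Ici 0) :=
  hf.comp (by fun_prop) fun b (hb : 0 ≤ b) => show 0 ≤ b + S' by linarith

theorem continuousOn_Xhi (hf : ContinuousOn f (Ici 0)) (hS' : 0 ≤ S') :
    ContinuousOn (fun S => Xhi f S S') (Ici 0) := by
  have hcdf : ContinuousOn (fun S => cdf f (S + S')) (Ici 0) := by
    simpa only [cdf] using continuousOn_comp_add_of_nonneg (continuousOn_primitive_Ici hf) hS'
  have hint : ContinuousOn (fun S => ∫ b in (0 : ℝ)..S, b * f (b + S')) (Ici 0) :=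
    continuousOn_primitive_Ici (continuousOn_id.mul (continuousOn_comp_add_of_nonneg hf hS'))
  exact hint.add (continuousOn_id.mul (continuousOn_const.sub hcdf))

theorem hasDerivAt_Xhi (hf : ContinuousOn f (Ici 0)) (hS' : 0 ≤ S') {S : ℝ} (hS : 0 < S) :
    HasDerivAt (fun S => Xhi f S S') (1 - cdf f (S + S')) S := by
  have hint : HasDerivAt (fun y => ∫ b in (0 : ℝ)..y, b * f (b + S')) (S * f (S + S')) S :=
    hasDerivAt_primitive_of_continuousOn_Ici
      (continuousOn_id.mul (continuousOn_comp_add_of_nonneg hf hS')) hS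
  have hcdf : HasDerivAt (fun y => cdf f (y + S')) (f (S + S')) S :=
    (hasDerivAt_primitive_of_continuousOn_Ici hf (by linarith)).comp_add_const S S'
  have htail : HasDerivAt (fun y => y * (1 - cdf f (y + S')))
      (1 * (1 - cdf f (S + S')) + S * (0 - f (S + S'))) S :=
    (hasDerivAt_id S).mul ((hasDerivAt_const S (1 : ℝ)).sub hcdf)
  exact (hint.add htail).congr_deriv (by ring)

end Xhi

theorem larger_firm_objective_strictConcave_general (f : ℝ → ℝ)
    (hf_cont : ContinuousOn f (Set.Ici 0))
    (hf_pos : ∀ x ∈ Set.Ici (0 : ℝ), 0 < f x)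
    (S' : ℝ) (hS' : 0 ≤ S') (R : ℝ) (hR : 0 < R) (γ : ℝ) :
    StrictConcaveOn ℝ (Set.Ici 0) (fun S => R * Xhi f S S' - γ * S) := by
  have hderiv : ∀ S ∈ interior (Ici (0 : ℝ)),
      deriv (fun S => R * Xhi f S S' - γ * S) S = R * (1 - cdf f (S + S')) - γ := by
    intro S hS
    rw [interior_Ici] at hS
    exact (((hasDerivAt_Xhi hf_cont hS' hS).const_mul R).sub
      ((hasDerivAt_id S).const_mul γ)).deriv.trans (by simp)
  refine StrictAntiOn.strictConcaveOn_of_deriv (convex_Ici 0)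
    (((continuousOn_Xhi hf_cont hS').const_smul R).sub (continuousOn_id.const_smul γ))
    fun a ha b hb hab => ?_
  rw [hderiv a ha, hderiv b hb]
  rw [interior_Ici] at ha hb
  have hF : cdf f (a + S') < cdf f (b + S') :=
    strictMonoOn_primitive_of_pos hf_cont hf_pos (show (0 : ℝ) ≤ a + S' by linarith [ha.out])
      (show (0 : ℝ) ≤ b + S' by linarith [hb.out]) (by linarith)
  linarith [mul_lt_mul_of_pos_left hF hR]

/-- If the probability density `f` is continuous and strictly positive on
`[0, ∞)`, then for any fixed `S' ≥ 0`, `R > 0` and any real `γ`, the larger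
firm's capacity-stage objective `S ↦ R * Xhi(S; S') - γ * S` is strictly
concave on `[0, ∞)`. -/
theorem larger_firm_objective_strictConcave (f : ℝ → ℝ)
    (hf_cont : ContinuousOn f (Set.Ici 0))
    (hf_pos : ∀ x ∈ Set.Ici (0 : ℝ), 0 < f x)
    (hf_int : IntegrableOn f (Set.Ici 0))
    (hf_tot : (∫ x in Set.Ici (0 : ℝ), f x) = 1)
    (S' : ℝ) (hS' : 0 ≤ S') (R : ℝ) (hR : 0 < R) (γ : ℝ) :
    StrictConcaveOn ℝ (Set.Ici 0) (fun S => R * Xhi f S S' - γ * S) :=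
  larger_firm_objective_strictConcave_general f hf_cont hf_pos S' hS' R hR γ
end

section
/- Suppose f is a strictly positive probability density on [0,infinity). Then for every S > 0, (1 - F(S)) * Xhi(S;S) / Xlo(S) + (F(S) - F(2S)) <= 1 - F(2S). (Equivalently, at equal capacities the slope of the smaller firm's capacity-stage payoff does not exceed the slope of the larger firm's capacity-stage payoff, so no ridge exists along the diagonal and pure-strategy capacity equilibria can only occur where the payoff segments have zero slope.) -/
open MeasureTheory

/-- Expected first-priority allocation of a storage of capacity `S`:
`Xlo(S) = ∫_0^S b f(b) db + S (1 - F(S))`. -/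
noncomputable def Xlo (f : ℝ → ℝ) (S : ℝ) : ℝ :=
  (∫ b in (0 : ℝ)..S, b * f b) + S * (1 - cdf f S)

/-- If `f` is a strictly positive probability density on `[0, ∞)`, then for
every `S > 0`,
`(1 - F(S)) * Xhi(S; S) / Xlo(S) + (F(S) - F(2S)) ≤ 1 - F(2S)`.
Equivalently, at equal capacities the slope of the smaller firm's
capacity-stage payoff does not exceed the slope of the larger firm's, so no
ridge exists along the diagonal. -/
theorem no_ridge_along_diagonal (f : ℝ → ℝ)
    (hf_meas : Measurable f)
    (hf_pos : ∀ x ∈ Set.Ici (0 : ℝ), 0 < f x)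
    (hf_int : IntegrableOn f (Set.Ici 0))
    (hf_tot : (∫ x in Set.Ici (0 : ℝ), f x) = 1) :
    ∀ S : ℝ, 0 < S →
      (1 - cdf f S) * Xhi f S S / Xlo f S + (cdf f S - cdf f (2 * S))
        ≤ 1 - cdf f (2 * S) := by
  intro S hS
  have h0S : (0:ℝ) ≤ S := hS.le
  -- interval integrability of f on nonneg intervals
  have hint : ∀ a b : ℝ, 0 ≤ a → 0 ≤ b → IntervalIntegrable f volume a b := by
    intro a b ha hb
    apply (hf_int.mono_set ?_).intervalIntegrable
    rw [Set.uIcc_eq_union]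
    intro x hx
    rcases hx with h | h
    · exact le_trans ha h.1
    · exact le_trans hb h.1
  -- 1 - F(S) = ∫_{Ioi S} f
  have htail : ∀ x : ℝ, 0 ≤ x → 1 - cdf f x = ∫ t in Set.Ioi x, f t := by
    intro x hx
    have h1 : cdf f x = ∫ t in Set.Ioc 0 x, f t := by
      rw [cdf, intervalIntegral.integral_of_le hx]
    have h2 : (∫ t in Set.Ici (0:ℝ), f t) = ∫ t in Set.Ioi (0:ℝ), f t :=
      integral_Ici_eq_integral_Ioi
    have hun : Set.Ioc (0:ℝ) x ∪ Set.Ioi x = Set.Ioi 0 := Set.Ioc_union_Ioi_eq_Ioi hx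
    have hdisj : Disjoint (Set.Ioc (0:ℝ) x) (Set.Ioi x) := Set.Ioc_disjoint_Ioi le_rfl
    have hi1 : IntegrableOn f (Set.Ioc 0 x) := hf_int.mono_set (Set.Ioc_subset_Icc_self.trans Set.Icc_subset_Ici_self)
    have hi2 : IntegrableOn f (Set.Ioi x) := hf_int.mono_set ((Set.Ioi_subset_Ici le_rfl).trans (Set.Ici_subset_Ici.mpr hx))
    have := setIntegral_union hdisj measurableSet_Ioi hi1 hi2
    rw [hun] at this
    rw [h1]
    rw [h2] at hf_tot
    linarith [this, hf_tot]
  have htailS := htail S h0S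
  -- 1 - F(S) > 0
  have hFS_pos : 0 < 1 - cdf f S := by
    rw [htailS]
    have hi2 : IntegrableOn f (Set.Ioi S) := hf_int.mono_set ((Set.Ioi_subset_Ici le_rfl).trans (Set.Ici_subset_Ici.mpr h0S))
    rw [setIntegral_pos_iff_support_of_nonneg_ae ?_ hi2]
    · have hsub : Set.Ioi S ⊆ Function.support f ∩ Set.Ioi S := by
        intro t ht
        exact ⟨(hf_pos t (le_of_lt (lt_of_le_of_lt h0S ht))).ne', ht⟩
      calc (0:ENNReal) < volume (Set.Ioi S) := by simp [Real.volume_Ioi]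
        _ ≤ volume (Function.support f ∩ Set.Ioi S) := measure_mono hsub
    · filter_upwards [ae_restrict_mem measurableSet_Ioi] with t ht
      exact (hf_pos t (le_of_lt (lt_of_le_of_lt h0S ht))).le
  -- nonnegativity of f on relevant sets
  have hfnn : ∀ b ∈ Set.Icc (0:ℝ) S, 0 ≤ f (b + S) := fun b hb =>
    (hf_pos _ (Set.mem_Ici.mpr (by linarith [hb.1]))).le
  -- integrability pieces
  have hfS2S : IntervalIntegrable f volume S (2*S) := hint S (2*S) h0S (by linarith)
  have hcompint : IntervalIntegrable (fun b => f (b + S)) volume 0 S := by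
    have := hfS2S.comp_add_right S
    simpa [show S - S = (0:ℝ) by ring, show 2*S - S = S by ring] using this
  have hbf : IntervalIntegrable (fun b => b * f (b + S)) volume 0 S :=
    hcompint.continuousOn_mul continuousOn_id
  have hSf : IntervalIntegrable (fun b => S * f (b + S)) volume 0 S :=
    hcompint.const_mul S
  -- ∫_0^S f(b+S) = F(2S) - F(S)
  have hshift : (∫ b in (0:ℝ)..S, f (b + S)) = cdf f (2*S) - cdf f S := by
    have h1 : (∫ b in (0:ℝ)..S, f (b + S)) = ∫ x in (0+S)..(S+S), f x :=
      intervalIntegral.integral_comp_add_right f S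
    have h2 : (∫ x in (0:ℝ)..S, f x) + (∫ x in S..(2*S), f x) = ∫ x in (0:ℝ)..(2*S), f x :=
      intervalIntegral.integral_add_adjacent_intervals (hint 0 S le_rfl h0S) hfS2S
    rw [h1]
    have : (0:ℝ) + S = S := by ring
    rw [this, two_mul] at *
    simp only [cdf]
    linarith [h2]
  -- key bound on the shifted integral
  have hkey : (∫ b in (0:ℝ)..S, b * f (b + S)) ≤ S * (cdf f (2*S) - cdf f S) := by
    have hmono : (∫ b in (0:ℝ)..S, b * f (b + S)) ≤ ∫ b in (0:ℝ)..S, S * f (b + S) := by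
      apply intervalIntegral.integral_mono_on h0S hbf hSf
      intro b hb
      exact mul_le_mul_of_nonneg_right hb.2 (hfnn b hb)
    rw [intervalIntegral.integral_const_mul, hshift] at hmono
    exact hmono
  -- Xhi ≤ S (1 - F S)
  have hXhi_le : Xhi f S S ≤ S * (1 - cdf f S) := by
    have h2S : S + S = 2 * S := by ring
    rw [Xhi, h2S]
    nlinarith [hkey]
  -- Xlo ≥ S (1 - F S) > 0
  have hlow_nonneg : 0 ≤ ∫ b in (0:ℝ)..S, b * f b := by
    apply intervalIntegral.integral_nonneg h0S
    intro b hb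
    exact mul_nonneg hb.1 (hf_pos b hb.1).le
  have hXlo_ge : S * (1 - cdf f S) ≤ Xlo f S := by
    rw [Xlo]; linarith
  have hXlo_pos : 0 < Xlo f S := lt_of_lt_of_le (by positivity) hXlo_ge
  -- conclude
  have hmain : (1 - cdf f S) * Xhi f S S / Xlo f S ≤ 1 - cdf f S := by
    rw [div_le_iff₀ hXlo_pos]
    calc (1 - cdf f S) * Xhi f S S ≤ (1 - cdf f S) * Xlo f S :=
          mul_le_mul_of_nonneg_left (hXhi_le.trans hXlo_ge) hFS_pos.le
      _ = (1 - cdf f S) * Xlo f S := rfl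
  linarith
end
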